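/- arXiv:1810.01023 — 2 statements merged into one kernel-verified Lean document; each statement's English description precedes it below -/
import Mathlib

section
/- Let C be a category and consider a commutative square g ∘ q₁ = q₂ ∘ f, where f : X₁ → X₂, q₁ : X₁ → M₁, q₂ : X₂ → M₂, g : M₁ → M₂, and assume the square is a pullback square. If q₁ is an epimorphism and q₂ is a regular epimorphism (a coequalizer of some pair of morphisms), then f is an isomorphism if and only if g is an isomorphism. -/
open CategoryTheory CategoryTheory.Limits

/-!
If `f` is an isomorphism, then `f⁻¹ ≫ q₁ : X₂ ⟶ M₁` lifts `q₂` through `g`, and the pullback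
property forces it to identify whatever `q₂` identifies. As `q₂` is a regular, hence effective,
epimorphism, `f⁻¹ ≫ q₁` descends along `q₂` to a map `M₂ ⟶ M₁`, which is inverse to `g` because
`q₁` and `q₂` are epimorphisms. Conversely, a pullback of an isomorphism is an isomorphism.
-/

namespace CategoryTheory.IsPullback

variable {C : Type*} [Category C] {P X Y Z : C}
  {fst : P ⟶ X} {snd : P ⟶ Y} {f : X ⟶ Z} {g : Y ⟶ Z}

lemma inv_fst_comp_snd_comp (h : IsPullback fst snd f g) [IsIso fst] :
    inv fst ≫ snd ≫ g = f := by
  rw [← h.w, IsIso.inv_hom_id_assoc]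

lemma comp_inv_fst_comp_snd_eq (h : IsPullback fst snd f g) [IsIso fst] {T : C}
    (a b : T ⟶ X) (hab : a ≫ f = b ≫ f) : a ≫ inv fst ≫ snd = b ≫ inv fst ≫ snd := by
  let ℓ := h.lift a (b ≫ inv fst ≫ snd)
    (by simp only [Category.assoc, h.inv_fst_comp_snd_comp, hab])
  have hℓ : ℓ = a ≫ inv fst := by
    rw [← cancel_mono fst, Category.assoc, IsIso.inv_hom_id, Category.comp_id, h.lift_fst]
  rw [← Category.assoc, ← hℓ, h.lift_snd]

lemma isIso_of_isIso_fst (h : IsPullback fst snd f g) [IsIso fst] [Epi snd] [EffectiveEpi f] :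
    IsIso g := by
  let g' : Z ⟶ Y := EffectiveEpi.desc f (inv fst ≫ snd) h.comp_inv_fst_comp_snd_eq
  have hg' : f ≫ g' = inv fst ≫ snd := EffectiveEpi.fac f _ _
  refine ⟨g', ?_, ?_⟩
  · rw [← cancel_epi snd, ← Category.assoc, ← h.w, Category.assoc, hg',
      IsIso.hom_inv_id_assoc, Category.comp_id]
  · rw [← cancel_epi f, ← Category.assoc, hg', Category.assoc, h.inv_fst_comp_snd_comp,
      Category.comp_id]

end CategoryTheory.IsPullback

/-- In any category, given a pullback square `g ∘ q₁ = q₂ ∘ f`, if `q₁` is an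
epimorphism and `q₂` is a regular epimorphism (a coequalizer of some pair),
then `f` is an isomorphism iff `g` is an isomorphism.
(Lemma 3.3 of the paper, for principal bundles of open groupoids.) -/
theorem isIso_iff_isIso_of_isPullback {C : Type*} [Category C]
    {X₁ X₂ M₁ M₂ : C} (f : X₁ ⟶ X₂) (q₁ : X₁ ⟶ M₁) (q₂ : X₂ ⟶ M₂) (g : M₁ ⟶ M₂)
    (hpb : IsPullback f q₁ q₂ g)
    (h₁ : Epi q₁) (h₂ : RegularEpi q₂) :
    IsIso f ↔ IsIso g := by
  have := h₂.effectiveEpi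
  exact ⟨fun _ ↦ hpb.isIso_of_isIso_fst, fun _ ↦ hpb.isIso_fst_of_isIso⟩
end

section
/- Let Q be a based groupoid quantale over a frame A, and let X be a stably supported Q-module. Then the support ς_X is A-equivariant: for every a ∈ A and x ∈ X one has ς_X(a▹x) = a ∧ ς_X(x). -/
/-- A based groupoid quantale over a frame `A`: a frame `Q` (with top `1_Q`)
equipped with a sup-preserving associative multiplication, an involution,
unital left/right `A`-actions and an equivariant support `ς_Q : Q → A`. -/
structure BasedGroupoidQuantale (A : Type*) (Q : Type*)
    [Order.Frame A] [Order.Frame Q] where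
  mul : Q → Q → Q
  star : Q → Q
  lres : A → Q → Q          -- `a ▹ q`
  rres : Q → A → Q          -- `q ◃ a`
  suppQ : Q → A             -- `ς_Q`
  mul_assoc : ∀ p q r, mul (mul p q) r = mul p (mul q r)
  mul_sSup_left : ∀ (S : Set Q) (q : Q), mul (sSup S) q = ⨆ p ∈ S, mul p q
  mul_sSup_right : ∀ (p : Q) (S : Set Q), mul p (sSup S) = ⨆ q ∈ S, mul p q
  star_star : ∀ q, star (star q) = q
  star_mul : ∀ p q, star (mul p q) = mul (star q) (star p)
  star_sSup : ∀ (S : Set Q), star (sSup S) = ⨆ q ∈ S, star q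
  lres_top_act : ∀ q, lres ⊤ q = q
  rres_top_act : ∀ q, rres q ⊤ = q
  lres_sSup_left : ∀ (S : Set A) (q : Q), lres (sSup S) q = ⨆ a ∈ S, lres a q
  lres_sSup_right : ∀ (a : A) (S : Set Q), lres a (sSup S) = ⨆ q ∈ S, lres a q
  rres_sSup_left : ∀ (S : Set Q) (a : A), rres (sSup S) a = ⨆ q ∈ S, rres q a
  rres_sSup_right : ∀ (q : Q) (S : Set A), rres q (sSup S) = ⨆ a ∈ S, rres q a
  lres_lres : ∀ a b q, lres a (lres b q) = lres (a ⊓ b) q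
  lres_rres_comm : ∀ a q b, rres (lres a q) b = lres a (rres q b)
  lres_mul : ∀ a p q, mul (lres a p) q = lres a (mul p q)
  rres_mul : ∀ p a q, mul (rres p a) q = mul p (lres a q)
  mul_rres : ∀ p q a, rres (mul p q) a = mul p (rres q a)
  star_lres_rres : ∀ a q b, star (lres a (rres q b)) = lres b (rres (star q) a)
  lres_inf : ∀ a q m, lres a q ⊓ m = lres a (q ⊓ m)
  inf_rres : ∀ m q a, m ⊓ rres q a = rres (q ⊓ m) a
  suppQ_sSup : ∀ (S : Set Q), suppQ (sSup S) = ⨆ q ∈ S, suppQ q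
  suppQ_top : suppQ ⊤ = ⊤
  suppQ_le_mul : ∀ q p, lres (suppQ q) p ≤ mul (mul q (star q)) p
  suppQ_lres : ∀ q, lres (suppQ q) q = q
  suppQ_equivariant : ∀ a q, suppQ (lres a q) = a ⊓ suppQ q

/-- A pre-Hilbert `Q`-module: a frame `X` (with top `1_X`) with a sup-preserving
`Q`-action and a unital left `A`-action, equipped with an inner product. -/
structure PreHilbertModule {A Q : Type*} [Order.Frame A] [Order.Frame Q]
    (GQ : BasedGroupoidQuantale A Q) (X : Type*) [Order.Frame X] where
  smul : Q → X → X          -- `q · x`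
  lres : A → X → X          -- `a ▹ x`
  inner : X → X → Q         -- `⟨x, y⟩`
  smul_sSup_left : ∀ (S : Set Q) (x : X), smul (sSup S) x = ⨆ q ∈ S, smul q x
  smul_sSup_right : ∀ (q : Q) (S : Set X), smul q (sSup S) = ⨆ x ∈ S, smul q x
  mul_smul : ∀ p q x, smul (GQ.mul p q) x = smul p (smul q x)
  lres_top_act : ∀ x, lres ⊤ x = x
  lres_sSup_left : ∀ (S : Set A) (x : X), lres (sSup S) x = ⨆ a ∈ S, lres a x
  lres_sSup_right : ∀ (a : A) (S : Set X), lres a (sSup S) = ⨆ x ∈ S, lres a x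
  lres_lres : ∀ a b x, lres a (lres b x) = lres (a ⊓ b) x
  lresQ_smul : ∀ a q x, smul (GQ.lres a q) x = lres a (smul q x)
  rresQ_smul : ∀ q a x, smul (GQ.rres q a) x = smul q (lres a x)
  lres_inf : ∀ a (x y : X), lres a (x ⊓ y) = lres a x ⊓ y
  inner_smul : ∀ q x y, inner (smul q x) y = GQ.mul q (inner x y)
  lres_inner : ∀ a x, GQ.lres a (inner x ⊤) = inner (lres a x) ⊤
  inner_sSup : ∀ (S : Set X) (y : X), inner (sSup S) y = ⨆ x ∈ S, inner x y
  inner_star : ∀ x y, inner x y = GQ.star (inner y x)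

/-! The support of a stably supported module is read off from the support of the quantale:
`ς_X(x) = ς_Q(⟨x, 1_X⟩)`. Indeed `x ≤ ⟨x,x⟩·1_X` gives `ς_X(x) ≤ ς_Q⟨x,x⟩ ≤ ς_Q⟨x,1_X⟩` by
stability, while `x = ς_X(x)▹x` gives `⟨x,1_X⟩ = ς_X(x)▹⟨x,1_X⟩`, whose support lies below
`ς_X(x)`. Equivariance then transfers from `ς_Q` along `⟨a▹x, 1_X⟩ = a▹⟨x, 1_X⟩`. -/

theorem monotone_of_map_sSup {α β : Type*} [CompleteLattice α] [CompleteLattice β]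
    {f : α → β} (h : ∀ S : Set α, f (sSup S) = ⨆ a ∈ S, f a) : Monotone f := by
  intro x y hxy
  have hpair := h {x, y}
  rw [sSup_pair, sup_eq_right.mpr hxy, iSup_pair] at hpair
  exact hpair ▸ le_sup_left

namespace BasedGroupoidQuantale

variable {A Q : Type*} [Order.Frame A] [Order.Frame Q] (GQ : BasedGroupoidQuantale A Q)

theorem star_monotone : Monotone GQ.star :=
  monotone_of_map_sSup GQ.star_sSup

theorem suppQ_monotone : Monotone GQ.suppQ :=
  monotone_of_map_sSup GQ.suppQ_sSup

end BasedGroupoidQuantale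

namespace PreHilbertModule

variable {A Q X : Type*} [Order.Frame A] [Order.Frame Q] [Order.Frame X]
  {GQ : BasedGroupoidQuantale A Q} (M : PreHilbertModule GQ X)

theorem lres_monotone (a : A) : Monotone (M.lres a) :=
  monotone_of_map_sSup (M.lres_sSup_right a)

theorem inner_monotone_left (y : X) : Monotone (fun x => M.inner x y) :=
  monotone_of_map_sSup (fun S => M.inner_sSup S y)

theorem inner_monotone_right (x : X) : Monotone (M.inner x) := by
  intro y z hyz
  rw [M.inner_star x y, M.inner_star x z]
  exact GQ.star_monotone (M.inner_monotone_left x hyz)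

section Support

variable {ς : X → A}

theorem le_smul_inner_self_top
    (hς_le : ∀ x, M.lres (ς x) ⊤ ≤ M.smul (M.inner x x) ⊤)
    (hς_restrict : ∀ x, M.lres (ς x) x = x) (x : X) :
    x ≤ M.smul (M.inner x x) ⊤ :=
  calc x = M.lres (ς x) x := (hς_restrict x).symm
    _ ≤ M.lres (ς x) ⊤ := M.lres_monotone _ le_top
    _ ≤ M.smul (M.inner x x) ⊤ := hς_le x

theorem supp_le_suppQ_inner_top (hmono : Monotone ς)
    (hς_le : ∀ x, M.lres (ς x) ⊤ ≤ M.smul (M.inner x x) ⊤)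
    (hς_restrict : ∀ x, M.lres (ς x) x = x)
    (hς_stable : ∀ (q : Q) (x : X), ς (M.smul q x) ≤ GQ.suppQ q) (x : X) :
    ς x ≤ GQ.suppQ (M.inner x ⊤) :=
  calc ς x ≤ ς (M.smul (M.inner x x) ⊤) :=
        hmono (M.le_smul_inner_self_top hς_le hς_restrict x)
    _ ≤ GQ.suppQ (M.inner x x) := hς_stable _ _
    _ ≤ GQ.suppQ (M.inner x ⊤) := GQ.suppQ_monotone (M.inner_monotone_right x le_top)

theorem suppQ_inner_top_le_supp (hς_restrict : ∀ x, M.lres (ς x) x = x) (x : X) :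
    GQ.suppQ (M.inner x ⊤) ≤ ς x :=
  calc GQ.suppQ (M.inner x ⊤) = GQ.suppQ (M.inner (M.lres (ς x) x) ⊤) := by rw [hς_restrict]
    _ = ς x ⊓ GQ.suppQ (M.inner x ⊤) := by rw [← M.lres_inner, GQ.suppQ_equivariant]
    _ ≤ ς x := inf_le_left

theorem supp_eq_suppQ_inner_top (hmono : Monotone ς)
    (hς_le : ∀ x, M.lres (ς x) ⊤ ≤ M.smul (M.inner x x) ⊤)
    (hς_restrict : ∀ x, M.lres (ς x) x = x)
    (hς_stable : ∀ (q : Q) (x : X), ς (M.smul q x) ≤ GQ.suppQ q) (x : X) :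
    ς x = GQ.suppQ (M.inner x ⊤) :=
  le_antisymm (M.supp_le_suppQ_inner_top hmono hς_le hς_restrict hς_stable x)
    (M.suppQ_inner_top_le_supp hς_restrict x)

end Support

end PreHilbertModule

theorem stably_supported_supp_equivariant_general {A Q X : Type*}
    [Order.Frame A] [Order.Frame Q] [Order.Frame X]
    (GQ : BasedGroupoidQuantale A Q) (M : PreHilbertModule GQ X)
    (ς : X → A) (hmono : Monotone ς)
    (hς_le : ∀ x, M.lres (ς x) ⊤ ≤ M.smul (M.inner x x) ⊤)
    (hς_restrict : ∀ x, M.lres (ς x) x = x)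
    (hς_stable : ∀ (q : Q) (x : X), ς (M.smul q x) ≤ GQ.suppQ q) :
    ∀ (a : A) (x : X), ς (M.lres a x) = a ⊓ ς x := by
  intro a x
  have hsupp := M.supp_eq_suppQ_inner_top hmono hς_le hς_restrict hς_stable
  rw [hsupp, hsupp x, ← M.lres_inner, GQ.suppQ_equivariant]

/-- Theorem 4.1 (second assertion): the support of a stably supported
`Q`-module is `A`-equivariant: `ς_X(a▹x) = a ∧ ς_X(x)`. -/
theorem stably_supported_supp_equivariant {A Q X : Type*}
    [Order.Frame A] [Order.Frame Q] [Order.Frame X]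
    (GQ : BasedGroupoidQuantale A Q) (M : PreHilbertModule GQ X)
    (hQ_stable : ∀ p q : Q, GQ.suppQ (GQ.mul p q) ≤ GQ.suppQ p)
    (ς : X → A) (hmono : Monotone ς) (hς_top : ς ⊤ = ⊤)
    (hς_le : ∀ x, M.lres (ς x) ⊤ ≤ M.smul (M.inner x x) ⊤)
    (hς_restrict : ∀ x, M.lres (ς x) x = x)
    (hς_stable : ∀ (q : Q) (x : X), ς (M.smul q x) ≤ GQ.suppQ q) :
    ∀ (a : A) (x : X), ς (M.lres a x) = a ⊓ ς x :=
  stably_supported_supp_equivariant_general GQ M ς hmono hς_le hς_restrict hς_stable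
end
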